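/- arXiv:1111.1433 — 2 statements merged into one kernel-verified Lean document; each statement's English description precedes it below -/
import Mathlib

section
/- Let S be the numerical semigroup generated by positive integers n_1,...,n_k with gcd(n_1,...,n_k)=1, let T(S)={g_1,...,g_t} be its set of pseudo-Frobenius numbers, and let f be an odd integer with f ≥ 3g(S)+1. Let T be the numerical semigroup generated by 2n_1,...,2n_k, f−2g_1,...,f−2g_t. Then S is the half of T: for every natural number x, x ∈ S if and only if 2x ∈ T. -/
/-- Membership of an integer in an additive submonoid of `ℕ`, viewed inside `ℤ`
via the inclusion `ℕ ⊆ ℤ`. -/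
def AddSubmonoid.zmem (S : AddSubmonoid ℕ) (x : ℤ) : Prop :=
  ∃ n : ℕ, n ∈ S ∧ (n : ℤ) = x

/-- The Frobenius number `g(S) = max {x ∈ ℤ : x ∉ S}` of a numerical semigroup. -/
noncomputable def frobeniusNumber (S : AddSubmonoid ℕ) : ℤ :=
  sSup {x : ℤ | ¬ S.zmem x}

/-- The set of pseudo-Frobenius numbers
`T(S) = {x ∈ ℤ \ S : x + s ∈ S for all s ∈ S, s ≠ 0}`. -/
def pseudoFrobeniusSet (S : AddSubmonoid ℕ) : Set ℤ :=
  {x : ℤ | ¬ S.zmem x ∧ ∀ s ∈ S, s ≠ 0 → S.zmem (x + s)}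

/-!
Write an element of `T` as `y + z` with `y ∈ ⟨2n₁,…,2n_k⟩ = 2S` and `z` a sum of `m` generators
`f - 2gⱼ`. These are odd and exceed `g(S)`, because `gⱼ ≤ g(S)` and `f ≥ 3g(S) + 1`. If `y + z = 2x`
then `z` is even, so either `m = 0` and `x ∈ S`, or `m ≥ 2` and `x ≥ z / 2 > g(S)`, so again `x ∈ S`.
-/

lemma exists_forall_ge_mem_closure_of_gcd_eq_one {ι : Type*} [Fintype ι] (n : ι → ℕ)
    (hgcd : Finset.univ.gcd n = 1) :
    ∃ N, ∀ m ≥ N, m ∈ AddSubmonoid.closure (Set.range n) := by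
  obtain ⟨N, hN⟩ := Nat.exists_mem_closure_of_ge (Set.range n)
  have hdvd : Nat.setGcd (Set.range n) ∣ 1 :=
    hgcd ▸ Finset.dvd_gcd fun i _ => Nat.setGcd_dvd_of_mem ⟨i, rfl⟩
  exact ⟨N, fun m hm => hN m hm (hdvd.trans (one_dvd m))⟩

namespace AddSubmonoid

variable {S : AddSubmonoid ℕ}

lemma not_zmem_neg_one : ¬ S.zmem (-1) := fun ⟨_, _, h⟩ => by omega

lemma zmem_natCast_iff {x : ℕ} : S.zmem x ↔ x ∈ S :=
  ⟨fun ⟨_, hm, hmx⟩ => Nat.cast_inj.mp hmx ▸ hm, fun hx => ⟨x, hx, rfl⟩⟩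

section Cofinite

variable (hS : ∃ N, ∀ m ≥ N, m ∈ S)
include hS

lemma le_frobeniusNumber {x : ℤ} (hx : ¬ S.zmem x) : x ≤ frobeniusNumber S := by
  refine le_csSup ?_ hx
  obtain ⟨N, hN⟩ := hS
  refine ⟨N, fun y hy => ?_⟩
  by_contra! hNy
  exact hy ⟨y.toNat, hN _ (by omega), by omega⟩

lemma neg_one_le_frobeniusNumber : -1 ≤ frobeniusNumber S :=
  le_frobeniusNumber hS not_zmem_neg_one

lemma mem_of_frobeniusNumber_lt {x : ℕ} (hx : frobeniusNumber S < x) : x ∈ S := by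
  by_contra hxS
  have := le_frobeniusNumber hS (zmem_natCast_iff.not.mpr hxS)
  omega

lemma le_frobeniusNumber_of_mem_pseudoFrobeniusSet {x : ℤ} (hx : x ∈ pseudoFrobeniusSet S) :
    x ≤ frobeniusNumber S :=
  le_frobeniusNumber hS hx.1

end Cofinite

lemma mem_closure_range_two_mul_iff {ι : Type*} {n : ι → ℕ} {y : ℕ} :
    y ∈ closure (Set.range fun i => 2 * n i) ↔ ∃ a ∈ closure (Set.range n), 2 * a = y := by
  have hrange : (Set.range fun i => 2 * n i) = AddMonoidHom.mulLeft 2 '' Set.range n := by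
    rw [← Set.range_comp]; rfl
  rw [hrange, ← AddMonoidHom.map_mclosure, mem_map]
  rfl

/-- An even nonzero sum of odd numbers, each at least `b`, has at least two summands. -/
lemma two_mul_le_of_mem_closure_range_odd {ι : Type*} {u : ι → ℕ} {b : ℕ}
    (hodd : ∀ j, Odd (u j)) (hb : ∀ j, b ≤ u j) {z : ℕ} (hz : z ∈ closure (Set.range u))
    (heven : Even z) (hz0 : z ≠ 0) : 2 * b ≤ z := by
  have hcount : ∃ m : ℕ, m * b ≤ z ∧ (Even z ↔ Even m) ∧ (m = 0 → z = 0) := by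
    clear heven hz0
    induction hz using closure_induction with
    | mem _ hy =>
      obtain ⟨j, rfl⟩ := hy
      exact ⟨1, by simpa using hb j, by simpa using Nat.not_even_iff_odd.mpr (hodd j), by simp⟩
    | zero => exact ⟨0, by simp⟩
    | add z₁ z₂ _ _ ih₁ ih₂ =>
      obtain ⟨m₁, hle₁, hpar₁, hzero₁⟩ := ih₁
      obtain ⟨m₂, hle₂, hpar₂, hzero₂⟩ := ih₂
      refine ⟨m₁ + m₂, by rw [add_mul]; omega, ?_, fun h => ?_⟩
      · rw [Nat.even_add, Nat.even_add, hpar₁, hpar₂]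
      · rw [hzero₁ (by omega), hzero₂ (by omega)]
  obtain ⟨m, hle, hpar, hzero⟩ := hcount
  obtain ⟨c, rfl⟩ := hpar.mp heven
  have hc : 1 ≤ c := Nat.one_le_iff_ne_zero.mpr fun h => hz0 (hzero (by omega))
  calc 2 * b ≤ (c + c) * b := Nat.mul_le_mul_right b (by omega)
    _ ≤ z := hle

lemma two_mul_mem_closure_union_iff {ι κ : Type*} {n : ι → ℕ} {u : κ → ℕ} {b : ℕ}
    (hodd : ∀ j, Odd (u j)) (hb : ∀ j, b ≤ u j)
    (hlarge : ∀ x ≥ b, x ∈ closure (Set.range n)) (x : ℕ) :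
    2 * x ∈ closure ((Set.range fun i => 2 * n i) ∪ Set.range u) ↔
      x ∈ closure (Set.range n) := by
  refine ⟨fun hx => ?_, fun hx => ?_⟩
  · rw [closure_union, mem_sup] at hx
    obtain ⟨y, hy, z, hz, hyz⟩ := hx
    obtain ⟨a, ha, rfl⟩ := mem_closure_range_two_mul_iff.mp hy
    by_cases hz0 : z = 0
    · rwa [show x = a by omega]
    · have := two_mul_le_of_mem_closure_range_odd hodd hb hz ⟨x - a, by omega⟩ hz0
      exact hlarge x (by omega)
  · exact closure_mono Set.subset_union_left (mem_closure_range_two_mul_iff.mpr ⟨x, hx, rfl⟩)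

end AddSubmonoid

open AddSubmonoid

theorem stmt2_general (k : ℕ) (n : Fin k → ℕ)
    (hgcd : Finset.univ.gcd n = 1)
    (S : AddSubmonoid ℕ) (hS : S = AddSubmonoid.closure (Set.range n))
    (t : ℕ) (g : Fin t → ℤ) (hg : pseudoFrobeniusSet S = Set.range g)
    (f : ℤ) (hodd : Odd f) (hf : 3 * frobeniusNumber S + 1 ≤ f)
    (T : AddSubmonoid ℕ)
    (hT : T = AddSubmonoid.closure
      (Set.range (fun i => 2 * n i) ∪ Set.range (fun j => (f - 2 * g j).toNat))) :
    ∀ x : ℕ, x ∈ S ↔ 2 * x ∈ T := by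
  have hcofinite : ∃ N, ∀ m ≥ N, m ∈ S :=
    hS ▸ exists_forall_ge_mem_closure_of_gcd_eq_one n hgcd
  have hF := neg_one_le_frobeniusNumber hcofinite
  have hgap (j : Fin t) : frobeniusNumber S + 1 ≤ f - 2 * g j := by
    have := le_frobeniusNumber_of_mem_pseudoFrobeniusSet hcofinite (hg ▸ ⟨j, rfl⟩ : g j ∈ _)
    omega
  have hodd_gen (j : Fin t) : Odd (f - 2 * g j).toNat := by
    obtain ⟨c, hc⟩ := hodd
    exact ⟨(c - g j).toNat, by have := hgap j; omega⟩
  have hlarge (x : ℕ) (hx : x ≥ (frobeniusNumber S + 1).toNat) : x ∈ S :=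
    mem_of_frobeniusNumber_lt hcofinite (by omega)
  intro x
  rw [hT, two_mul_mem_closure_union_iff hodd_gen (fun j => Int.toNat_le_toNat (hgap j))
    (hS ▸ hlarge), ← hS]

/-- with `T = ⟨2n₁,…,2n_k, f−2g₁,…,f−2g_t⟩` as in the half
construction, `S` is the half of `T`: for every `x ∈ ℕ`, `x ∈ S ↔ 2x ∈ T`. -/
theorem stmt2 (k : ℕ) (hk : 0 < k) (n : Fin k → ℕ) (hn : ∀ i, 0 < n i)
    (hgcd : Finset.univ.gcd n = 1)
    (S : AddSubmonoid ℕ) (hS : S = AddSubmonoid.closure (Set.range n))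
    (t : ℕ) (g : Fin t → ℤ) (hg : pseudoFrobeniusSet S = Set.range g)
    (f : ℤ) (hodd : Odd f) (hf : 3 * frobeniusNumber S + 1 ≤ f)
    (T : AddSubmonoid ℕ)
    (hT : T = AddSubmonoid.closure
      (Set.range (fun i => 2 * n i) ∪ Set.range (fun j => (f - 2 * g j).toNat))) :
    ∀ x : ℕ, x ∈ S ↔ 2 * x ∈ T :=
  stmt2_general k n hgcd S hS t g hg f hodd hf T hT
end

section
/- Every telescopic numerical semigroup is symmetric: if S is a numerical semigroup generated by a telescopic sequence (n_1,...,n_k), then for every integer x, x ∉ S if and only if g(S) − x ∈ S. -/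
/-- `d i = gcd(n 0, …, n i)`, the gcd of the first `i+1` terms of the sequence. -/
def partialGcd (k : ℕ) (n : Fin k → ℕ) (i : Fin k) : ℕ :=
  (Finset.univ.filter (fun j => j ≤ i)).gcd n

/-- A sequence `n 0 < n 1 < ⋯ < n (k-1)` of positive integers with
`gcd = 1` is telescopic if for every `i ≥ 1`, `n i / d i` belongs to the
submonoid of `ℕ` generated by `n 0 / d (i-1), …, n (i-1) / d (i-1)`,
where `d i = gcd(n 0, …, n i)`. -/
def IsTelescopic (k : ℕ) (n : Fin k → ℕ) : Prop :=
  StrictMono n ∧ (∀ i, 0 < n i) ∧ Finset.univ.gcd n = 1 ∧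
  ∀ i : Fin k, 0 < (i : ℕ) →
    n i / partialGcd k n i ∈ AddSubmonoid.closure
      {m : ℕ | ∃ j : Fin k, j < i ∧
        m = n j / ((Finset.univ.filter (fun j' => j' < i)).gcd n)}

/-!
A gluing `d T + ℕ m` of a numerical semigroup `T`, symmetric with centre `g`, with
`gcd (d, m) = 1` and `m ∈ T` is symmetric with centre `d g + (d - 1) m`: every integer is
uniquely `d t + a m` with `0 ≤ a < d`, it lies in `d T + ℕ m` exactly when `t ∈ T`, and the
reflection `x ↦ d g + (d - 1) m - x` acts as `t ↦ g - t`, `a ↦ d - 1 - a`.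

For a telescopic sequence, the semigroup generated by `n 0 / d i, …, n i / d i` is the gluing of
the one generated by `n 0 / d (i-1), …, n (i-1) / d (i-1)` with `d = d (i-1) / d i` and
`m = n i / d i`, and telescopicity says precisely that `m` lies in the smaller semigroup.
Starting from `ℕ` at `i = 0` and ending at `S` since `d (k-1) = 1`, induction shows that `S`
is symmetric.
-/

open Finset

theorem Nat.Coprime.exists_eq_mul_add_mul {d m : ℕ} (hdm : d.Coprime m) (hd : 0 < d) (x : ℤ) :
    ∃ a < d, ∃ t : ℤ, x = d * t + a * m := by
  obtain ⟨u, v, huv⟩ : IsCoprime (d : ℤ) m := Nat.isCoprime_iff_coprime.mpr hdm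
  have hd' : (0 : ℤ) < d := by exact_mod_cast hd
  have hr₀ := Int.emod_nonneg (x * v) hd'.ne'
  have hrd := Int.emod_lt_of_pos (x * v) hd'
  refine ⟨((x * v) % d).toNat, by omega, x * u + (x * v) / d * m, ?_⟩
  rw [Int.toNat_of_nonneg hr₀]
  linear_combination (-x) * huv - (m : ℤ) * Int.mul_ediv_add_emod (x * v) d

namespace AddSubmonoid

variable {S T : AddSubmonoid ℕ}

theorem zmem_natCast {p : ℕ} : S.zmem p ↔ p ∈ S :=
  ⟨fun ⟨q, hq, hqp⟩ => (Nat.cast_injective hqp : q = p) ▸ hq, fun h => ⟨p, h, rfl⟩⟩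

theorem zmem_nonneg {x : ℤ} (h : S.zmem x) : 0 ≤ x := by
  obtain ⟨p, -, rfl⟩ := h
  positivity

theorem zmem_top {x : ℤ} : (⊤ : AddSubmonoid ℕ).zmem x ↔ 0 ≤ x :=
  ⟨zmem_nonneg, fun hx => ⟨x.toNat, mem_top _, Int.toNat_of_nonneg hx⟩⟩

/-- `S` is symmetric with centre `g`, which is then its Frobenius number. -/
def IsSymmetricAbout (S : AddSubmonoid ℕ) (g : ℤ) : Prop :=
  ∀ x : ℤ, ¬ S.zmem x ↔ S.zmem (g - x)

theorem isSymmetricAbout_top : (⊤ : AddSubmonoid ℕ).IsSymmetricAbout (-1) := by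
  intro x
  rw [zmem_top, zmem_top]
  omega

theorem IsSymmetricAbout.frobeniusNumber_eq {g : ℤ} (hS : S.IsSymmetricAbout g) :
    frobeniusNumber S = g := by
  have hg : ¬ S.zmem g := (hS g).mpr (by simpa using zmem_natCast.mpr S.zero_mem)
  have hle : ∀ x ∈ {x : ℤ | ¬ S.zmem x}, x ≤ g := fun x hx =>
    sub_nonneg.mp (zmem_nonneg ((hS x).mp hx))
  exact le_antisymm (csSup_le ⟨g, hg⟩ hle) (le_csSup ⟨g, hle⟩ hg)

theorem zmem_map_mulLeft_sup_iff {d m a : ℕ} (hdm : d.Coprime m) (hm : m ∈ T) (ha : a < d)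
    (t : ℤ) : (T.map (AddMonoidHom.mulLeft d) ⊔ closure {m}).zmem (d * t + a * m) ↔ T.zmem t := by
  constructor
  · rintro ⟨N, hN, hNt⟩
    obtain ⟨_, ⟨t₀, ht₀, rfl⟩, _, hb, rfl⟩ := mem_sup.mp hN
    obtain ⟨b, rfl⟩ := mem_closure_singleton.mp hb
    simp only [AddMonoidHom.coe_mulLeft, smul_eq_mul] at hNt
    push_cast at hNt
    have hdvd : (d : ℤ) ∣ (b - a) * m := ⟨t - t₀, by linear_combination hNt⟩
    obtain ⟨q, hq⟩ := (Nat.isCoprime_iff_coprime.mpr hdm).dvd_of_dvd_mul_right hdvd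
    have hq₀ : 0 ≤ q := by
      by_contra! h
      nlinarith
    have hd : (d : ℤ) ≠ 0 := by omega
    have ht : t = t₀ + q * m := mul_left_cancel₀ hd (by linear_combination -hNt + m * hq)
    refine ⟨t₀ + q.toNat * m, add_mem ht₀ (nsmul_mem hm _), ?_⟩
    rw [ht]
    push_cast
    rw [Int.toNat_of_nonneg hq₀]
  · rintro ⟨t, ht, rfl⟩
    refine ⟨d * t + a * m, ?_, by push_cast; ring⟩
    exact add_mem (mem_sup_left (mem_map_of_mem _ ht))
      (mem_sup_right (mem_closure_singleton.mpr ⟨a, rfl⟩))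

theorem IsSymmetricAbout.map_mulLeft_sup {g : ℤ} (hT : T.IsSymmetricAbout g) {d m : ℕ}
    (hd : 0 < d) (hdm : d.Coprime m) (hm : m ∈ T) :
    (T.map (AddMonoidHom.mulLeft d) ⊔ closure {m}).IsSymmetricAbout (d * g + (d - 1) * m) := by
  intro x
  obtain ⟨a, ha, t, rfl⟩ := hdm.exists_eq_mul_add_mul hd x
  have hreflect : (d : ℤ) * g + (d - 1) * m - (d * t + a * m) =
      d * (g - t) + ((d - 1 - a : ℕ) : ℤ) * m := by
    push_cast [Nat.sub_sub, Nat.cast_sub (show 1 + a ≤ d by omega)]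
    ring
  rw [hreflect, zmem_map_mulLeft_sup_iff hdm hm ha, zmem_map_mulLeft_sup_iff hdm hm (by omega),
    hT]

end AddSubmonoid

section Prefix

variable {k : ℕ} (n : Fin k → ℕ)

/-- The `d i` of `IsTelescopic` is `prefixGcd n (i + 1)`; `prefixGcd n 0 = 0`. -/
def prefixGcd (i : ℕ) : ℕ :=
  (univ.filter fun j : Fin k => (j : ℕ) < i).gcd n

def prefixSemigroup (i : ℕ) : AddSubmonoid ℕ :=
  AddSubmonoid.closure {m | ∃ j : Fin k, (j : ℕ) < i ∧ m = n j / prefixGcd n i}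

variable {n}

theorem prefixGcd_dvd {i : ℕ} {j : Fin k} (hj : (j : ℕ) < i) : prefixGcd n i ∣ n j :=
  Finset.gcd_dvd (by simpa using hj)

theorem prefixGcd_pos (hn : ∀ j, 0 < n j) {i : ℕ} {j : Fin k} (hj : (j : ℕ) < i) :
    0 < prefixGcd n i :=
  Nat.pos_of_dvd_of_pos (prefixGcd_dvd hj) (hn j)

theorem prefixGcd_succ {i : ℕ} (hi : i < k) :
    prefixGcd n (i + 1) = Nat.gcd (prefixGcd n i) (n ⟨i, hi⟩) := by
  have hinsert : (univ.filter fun j : Fin k => (j : ℕ) < i + 1) =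
      insert ⟨i, hi⟩ (univ.filter fun j : Fin k => (j : ℕ) < i) := by
    ext j
    simp only [mem_filter, mem_univ, true_and, mem_insert, Fin.ext_iff]
    omega
  rw [prefixGcd, hinsert, gcd_insert, Nat.gcd_comm]
  rfl

theorem prefixGcd_succ_dvd {i : ℕ} (hi : i < k) : prefixGcd n (i + 1) ∣ prefixGcd n i := by
  rw [prefixGcd_succ hi]
  exact Nat.gcd_dvd_left _ _

theorem prefixGcd_self : prefixGcd n k = univ.gcd n := by
  simp [prefixGcd]

theorem prefixSemigroup_one (h0 : 0 < k) (hn : 0 < n ⟨0, h0⟩) : prefixSemigroup n 1 = ⊤ := by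
  have hgen : {m | ∃ j : Fin k, (j : ℕ) < 1 ∧ m = n j / prefixGcd n 1} = {1} := by
    have hgcd : prefixGcd n 1 = n ⟨0, h0⟩ := by
      simpa [prefixGcd] using prefixGcd_succ (n := n) h0
    ext m
    simp only [Set.mem_ofPred_eq, Set.mem_singleton_iff, Nat.lt_one_iff, hgcd]
    exact ⟨fun ⟨j, hj, hm⟩ => by rw [hm, show j = ⟨0, h0⟩ from Fin.ext hj, Nat.div_self hn],
      fun hm => ⟨⟨0, h0⟩, rfl, by rw [hm, Nat.div_self hn]⟩⟩
  rw [prefixSemigroup, hgen, Nat.addSubmonoidClosure_one]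

theorem prefixSemigroup_self (h : univ.gcd n = 1) :
    prefixSemigroup n k = AddSubmonoid.closure (Set.range n) := by
  rw [prefixSemigroup, prefixGcd_self, h]
  congr 1
  ext m
  simp [eq_comm]

theorem prefixSemigroup_succ (hn : ∀ j, 0 < n j) {i : ℕ} (hi : i < k) :
    prefixSemigroup n (i + 1) =
      (prefixSemigroup n i).map (AddMonoidHom.mulLeft (prefixGcd n i / prefixGcd n (i + 1))) ⊔
        AddSubmonoid.closure {n ⟨i, hi⟩ / prefixGcd n (i + 1)} := by
  have hpos : 0 < prefixGcd n (i + 1) := prefixGcd_pos hn (j := ⟨i, hi⟩) (by simp)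
  have hrescale : ∀ j : Fin k, (j : ℕ) < i →
      prefixGcd n i / prefixGcd n (i + 1) * (n j / prefixGcd n i) = n j / prefixGcd n (i + 1) := by
    intro j hj
    obtain ⟨e, he⟩ := prefixGcd_succ_dvd (n := n) hi
    obtain ⟨q, hq⟩ := prefixGcd_dvd (n := n) hj
    rw [hq, he]
    rcases Nat.eq_zero_or_pos e with rfl | he
    · simp
    rw [Nat.mul_div_cancel_left _ hpos, Nat.mul_div_cancel_left _ (by positivity), mul_assoc,
      Nat.mul_div_cancel_left _ hpos]
  rw [prefixSemigroup, prefixSemigroup, AddMonoidHom.map_mclosure, ← AddSubmonoid.closure_union]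
  congr 1
  ext m
  simp only [Set.mem_ofPred_eq, Set.mem_union, Set.mem_image, Set.mem_singleton_iff,
    AddMonoidHom.coe_mulLeft]
  constructor
  · rintro ⟨j, hj, rfl⟩
    rcases Nat.lt_succ_iff_lt_or_eq.mp hj with hj | hj
    · exact Or.inl ⟨_, ⟨j, hj, rfl⟩, hrescale j hj⟩
    · exact Or.inr (by rw [show j = ⟨i, hi⟩ from Fin.ext hj])
  · rintro (⟨_, ⟨j, hj, rfl⟩, rfl⟩ | rfl)
    · exact ⟨j, by omega, hrescale j hj⟩
    · exact ⟨⟨i, hi⟩, by simp, rfl⟩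

theorem IsTelescopic.mem_prefixSemigroup (htel : IsTelescopic k n) {i : ℕ} (h0 : 0 < i)
    (hi : i < k) : n ⟨i, hi⟩ / prefixGcd n (i + 1) ∈ prefixSemigroup n i := by
  have hpartial : partialGcd k n ⟨i, hi⟩ = prefixGcd n (i + 1) := by
    simp only [partialGcd, prefixGcd, Fin.le_iff_val_le_val, Nat.lt_succ_iff]
  have := htel.2.2.2 ⟨i, hi⟩ h0
  simp only [Fin.lt_def] at this
  rwa [hpartial] at this

theorem IsTelescopic.exists_isSymmetricAbout_prefixSemigroup (htel : IsTelescopic k n) :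
    ∀ i < k, ∃ g, (prefixSemigroup n (i + 1)).IsSymmetricAbout g := by
  have hn := htel.2.1
  intro i hi
  induction i with
  | zero => exact ⟨-1, prefixSemigroup_one hi (hn _) ▸ AddSubmonoid.isSymmetricAbout_top⟩
  | succ i ih =>
    obtain ⟨g, hg⟩ := ih (by omega)
    have hpos : 0 < prefixGcd n (i + 1 + 1) := prefixGcd_pos hn (j := ⟨i + 1, hi⟩) (by simp)
    have hd : 0 < prefixGcd n (i + 1) / prefixGcd n (i + 1 + 1) :=
      Nat.div_pos (Nat.le_of_dvd (prefixGcd_pos hn (j := ⟨0, by omega⟩) (by simp))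
        (prefixGcd_succ_dvd hi)) hpos
    have hcop := Nat.coprime_div_gcd_div_gcd (m := prefixGcd n (i + 1)) (n := n ⟨i + 1, hi⟩)
      (by rwa [← prefixGcd_succ hi])
    rw [← prefixGcd_succ hi] at hcop
    rw [prefixSemigroup_succ hn hi]
    exact ⟨_, hg.map_mulLeft_sup hd hcop (htel.mem_prefixSemigroup i.succ_pos hi)⟩

end Prefix

/-- every telescopic numerical semigroup is symmetric. -/
theorem stmt4 (k : ℕ) (hk : 0 < k) (n : Fin k → ℕ) (htel : IsTelescopic k n)
    (S : AddSubmonoid ℕ) (hS : S = AddSubmonoid.closure (Set.range n)) :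
    ∀ x : ℤ, ¬ S.zmem x ↔ S.zmem (frobeniusNumber S - x) := by
  obtain ⟨i, rfl⟩ : ∃ i, k = i + 1 := ⟨k - 1, by omega⟩
  obtain ⟨g, hg⟩ := htel.exists_isSymmetricAbout_prefixSemigroup i i.lt_succ_self
  rw [prefixSemigroup_self htel.2.2.1, ← hS] at hg
  rwa [hg.frobeniusNumber_eq]
end
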